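/- Let K = ℓ²(ℤ₊ × ℤ₊, ℂ) and define S₁, S₂ ∈ L(K) by (S₁f)(i,j) = f(i+1, j) and (S₂f)(i,j) = f(i, j+1). Then S₁ and S₂ are commuting surjections, each of S₁ and S₂ has infinite-dimensional kernel (so each is a universal operator on K), but the joint kernel Ker(S₁) ∩ Ker(S₂) is one-dimensional (spanned by the standard basis vector supported at (0,0)); consequently the pair (S₁, S₂) is not a universal commuting pair. -/

import Mathlib

noncomputable section

/-- Universal operator on a complex Hilbert space. -/
def IsUniversal {H : Type*} [NormedAddCommGroup H] [InnerProductSpace ℂ H]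
    (U : H →L[ℂ] H) : Prop :=
  ∀ T : H →L[ℂ] H, ∃ M : Submodule ℂ H, IsClosed (M : Set H) ∧ (∀ x ∈ M, U x ∈ M) ∧
    ∃ c : ℂ, c ≠ 0 ∧ ∃ J : H ≃L[ℂ] M, ∀ x : H, U (J x : H) = c • ((J (T x) : H))

/-- A commuting pair `(U₁, U₂)` is a *universal commuting pair* if for every commuting pair
`(S₁, S₂)` there are a nonzero `c ∈ ℂ`, a closed subspace `M` invariant under both `U₁` and
`U₂`, and a continuous linear isomorphism `V : H ≃ M` with `Uᵢ (V x) = c • V (Sᵢ x)` for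
all `x` and `i = 1, 2`. -/
def IsUniversalPair {H : Type*} [NormedAddCommGroup H] [InnerProductSpace ℂ H]
    (U₁ U₂ : H →L[ℂ] H) : Prop :=
  U₁.comp U₂ = U₂.comp U₁ ∧
  ∀ S₁ S₂ : H →L[ℂ] H, S₁.comp S₂ = S₂.comp S₁ →
    ∃ M : Submodule ℂ H, IsClosed (M : Set H) ∧
      (∀ x ∈ M, U₁ x ∈ M) ∧ (∀ x ∈ M, U₂ x ∈ M) ∧
      ∃ c : ℂ, c ≠ 0 ∧ ∃ V : H ≃L[ℂ] M,
        (∀ x : H, U₁ (V x : H) = c • ((V (S₁ x) : H))) ∧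
        (∀ x : H, U₂ (V x : H) = c • ((V (S₂ x) : H)))

/-!
Caradus' criterion: if `U R = 1` for a bounded `R` and `W` is an isometry with `U W = 0`, then
for `c` small enough the series `J = ∑ Rⁿ W (c T)ⁿ` converges, satisfies `U J = c J T` by
telescoping, and stays within `1/2` of `W`; so `J` is bounded below and `U` on its closed
range is similar to `c T`. Both coordinate shifts of `ℓ²(ℕ × ℕ)` have the forward shifts as
right inverses, and Cantor pairing gives isometries into their kernels. A universal pair
`(U₁, U₂)` instead must map the whole space injectively into `ker U₁ ∩ ker U₂` (intertwine
with `(0, 0)`), which is impossible here since that joint kernel is the line through the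
basis vector at `(0, 0)`.
-/

open Function Set
open scoped ENNReal NNReal

namespace lp

variable {𝕜 E κ ι : Type*} [NormedField 𝕜] [NormedAddCommGroup E] [NormedSpace 𝕜 E]
  {p : ℝ≥0∞} {g : κ → ι}

lemma norm_extend_zero_rpow (hp : 0 < p.toReal) (f : κ → E) (i : ι) :
    ‖extend g f 0 i‖ ^ p.toReal = extend g (fun k => ‖f k‖ ^ p.toReal) 0 i := by
  rw [apply_extend (fun x : E => ‖x‖ ^ p.toReal)]
  congr
  ext
  simp [Real.zero_rpow hp.ne']

lemma memℓp_extend_zero (hg : Injective g) (hp : 0 < p.toReal) (f : lp (fun _ : κ => E) p) :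
    Memℓp (extend g ⇑f 0) p := by
  rw [memℓp_gen_iff hp]
  simp_rw [norm_extend_zero_rpow hp]
  exact (summable_extend_zero hg).2 ((lp.memℓp f).summable hp)

variable (𝕜 E) in
def extendZero [Fact (1 ≤ p)] (hp : 0 < p.toReal) (hg : Injective g) :
    lp (fun _ : κ => E) p →ₗᵢ[𝕜] lp (fun _ : ι => E) p where
  toFun f := ⟨extend g ⇑f 0, memℓp_extend_zero hg hp f⟩
  map_add' f₁ f₂ := lp.ext <| by
    simp only [lp.coeFn_add]
    convert extend_add g (⇑f₁) (⇑f₂) (0 : ι → E) 0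
    simp
  map_smul' c f := lp.ext <| by simpa using extend_smul c g f 0
  norm_map' f := by
    rw [lp.norm_eq_tsum_rpow hp, lp.norm_eq_tsum_rpow hp]
    congr 1
    exact (tsum_congr (norm_extend_zero_rpow hp (⇑f))).trans (tsum_extend_zero hg _)

lemma extendZero_apply [Fact (1 ≤ p)] (hp : 0 < p.toReal) (hg : Injective g)
    (f : lp (fun _ : κ => E) p) (i : ι) : extendZero 𝕜 E hp hg f i = extend g f 0 i := rfl

lemma linearIndependent_single_one [DecidableEq ι] :
    LinearIndependent 𝕜 fun i : ι => lp.single (E := fun _ : ι => 𝕜) p i 1 :=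
  LinearIndependent.of_comp (lpSubmodule 𝕜 (fun _ : ι => 𝕜) p).subtype
    (Pi.linearIndependent_single_one ι 𝕜)

lemma not_finiteDimensional [Infinite ι] : ¬ FiniteDimensional 𝕜 (lp (fun _ : ι => 𝕜) p) :=
  fun _ => by
    classical
    exact Module.Finite.not_linearIndependent_of_infinite _
      (linearIndependent_single_one (𝕜 := 𝕜) (ι := ι) (p := p))

lemma mem_span_single_one_iff [DecidableEq ι] {i₀ : ι} {f : lp (fun _ : ι => 𝕜) p} :
    f ∈ Submodule.span 𝕜 {lp.single p i₀ 1} ↔ ∀ i ≠ i₀, f i = 0 := by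
  rw [Submodule.mem_span_singleton]
  constructor
  · rintro ⟨a, rfl⟩ i hi
    simp [hi]
  · intro hf
    refine ⟨f i₀, lp.ext (funext fun i => ?_)⟩
    rcases eq_or_ne i i₀ with rfl | hi
    · simp
    · simp [hi, hf i hi]

end lp

namespace ContinuousLinearMap

variable {𝕜 E : Type*} [NontriviallyNormedField 𝕜] [NormedAddCommGroup E] [NormedSpace 𝕜 E]

def caradusSeq (R W T : E →L[𝕜] E) : ℕ → E →L[𝕜] E
  | 0 => W
  | n + 1 => R * caradusSeq R W T n * T

variable {R W T : E →L[𝕜] E}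

lemma norm_caradusSeq_le (n : ℕ) : ‖caradusSeq R W T n‖ ≤ (‖R‖ * ‖T‖) ^ n * ‖W‖ := by
  induction n with
  | zero => simp [caradusSeq]
  | succ n ih =>
    calc ‖R * caradusSeq R W T n * T‖ ≤ ‖R‖ * ‖caradusSeq R W T n‖ * ‖T‖ := norm_mul₃_le
      _ ≤ ‖R‖ * ((‖R‖ * ‖T‖) ^ n * ‖W‖) * ‖T‖ := by gcongr
      _ = (‖R‖ * ‖T‖) ^ (n + 1) * ‖W‖ := by ring

variable [CompleteSpace E]

lemma summable_caradusSeq (h : ‖R‖ * ‖T‖ < 1) : Summable (caradusSeq R W T) :=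
  .of_norm_bounded ((summable_geometric_of_lt_one (by positivity) h).mul_right ‖W‖)
    norm_caradusSeq_le

lemma mul_tsum_caradusSeq {U : E →L[𝕜] E} (hUR : U * R = 1) (hUW : U * W = 0)
    (h : ‖R‖ * ‖T‖ < 1) :
    U * ∑' n, caradusSeq R W T n = (∑' n, caradusSeq R W T n) * T := by
  have hs : Summable (caradusSeq R W T) := summable_caradusSeq h
  have hstep (n : ℕ) : U * caradusSeq R W T (n + 1) = caradusSeq R W T n * T := by
    simp only [caradusSeq, ← mul_assoc, hUR, one_mul]
  calc U * ∑' n, caradusSeq R W T n = ∑' n, U * caradusSeq R W T n := (hs.tsum_mul_left U).symm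
    _ = ∑' n, U * caradusSeq R W T (n + 1) := by
      rw [(hs.mul_left U).tsum_eq_zero_add, caradusSeq, hUW, zero_add]
    _ = (∑' n, caradusSeq R W T n) * T := by simp_rw [hstep]; exact hs.tsum_mul_right T

lemma norm_tsum_caradusSeq_sub_le (h : ‖R‖ * ‖T‖ ≤ 1 / 3) :
    ‖(∑' n, caradusSeq R W T n) - W‖ ≤ ‖W‖ / 2 := by
  have hs : Summable (caradusSeq R W T) := summable_caradusSeq (h.trans_lt (by norm_num))
  have hgeo : HasSum (fun n : ℕ => ‖W‖ / 3 * (1 / 3 : ℝ) ^ n) (‖W‖ / 2) := by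
    have := (hasSum_geometric_of_lt_one (r := (1 / 3 : ℝ)) (by norm_num) (by norm_num)).mul_left
      (‖W‖ / 3)
    rwa [show ‖W‖ / 3 * (1 - 1 / 3 : ℝ)⁻¹ = ‖W‖ / 2 by ring] at this
  rw [hs.tsum_eq_zero_add, caradusSeq, add_sub_cancel_left]
  refine tsum_of_norm_bounded hgeo fun n => (norm_caradusSeq_le _).trans ?_
  calc (‖R‖ * ‖T‖) ^ (n + 1) * ‖W‖ ≤ (1 / 3) ^ (n + 1) * ‖W‖ := by gcongr
    _ = ‖W‖ / 3 * (1 / 3) ^ n := by ring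

end ContinuousLinearMap

lemma ContinuousLinearMap.antilipschitzWith_two_of_norm_sub_le {𝕜 E F : Type*}
    [NontriviallyNormedField 𝕜] [NormedAddCommGroup E] [NormedSpace 𝕜 E]
    [NormedAddCommGroup F] [NormedSpace 𝕜 F] {J : E →L[𝕜] F} (W : E →ₗᵢ[𝕜] F)
    (h : ‖J - W.toContinuousLinearMap‖ ≤ 1 / 2) : AntilipschitzWith 2 J :=
  J.antilipschitz_of_bound fun x => by
    have hJW : ‖W x - J x‖ ≤ 1 / 2 * ‖x‖ := by
      rw [norm_sub_rev]
      exact ((J - W.toContinuousLinearMap).le_opNorm x).trans (by gcongr)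
    have := norm_le_insert' (W x) (J x)
    rw [W.norm_map] at this
    push_cast
    linarith

section Universal

variable {H : Type*} [NormedAddCommGroup H] [InnerProductSpace ℂ H] [CompleteSpace H]

lemma isUniversal_of_exists_intertwining {U : H →L[ℂ] H}
    (h : ∀ T : H →L[ℂ] H, ∃ J : H →L[ℂ] H, ∃ c : ℂ, c ≠ 0 ∧ Injective J ∧
      IsClosed (range J) ∧ U * J = c • (J * T)) :
    IsUniversal U := by
  intro T
  obtain ⟨J, c, hc, hinj, hclosed, hUJ⟩ := h T
  refine ⟨J.range, hclosed, ?_, c, hc, J.equivRange hinj hclosed, fun x => congr($hUJ x)⟩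
  rintro _ ⟨y, rfl⟩
  exact ⟨c • T y, by simpa using congr($hUJ y).symm⟩

open ContinuousLinearMap in
theorem isUniversal_of_mul_eq_one_of_mul_isometry_eq_zero {U R : H →L[ℂ] H} (W : H →ₗᵢ[ℂ] H)
    (hUR : U * R = 1) (hUW : U * W.toContinuousLinearMap = 0) : IsUniversal U := by
  refine isUniversal_of_exists_intertwining fun T => ?_
  set r : ℝ := (3 * (‖R‖ * ‖T‖ + 1))⁻¹ with hr_def
  have hr : 0 < r := by positivity
  have hsmall : ‖R‖ * ‖(r : ℂ) • T‖ ≤ 1 / 3 := by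
    rw [norm_smul, Complex.norm_real, Real.norm_of_nonneg hr.le, hr_def, mul_left_comm,
      inv_mul_le_iff₀ (by positivity)]
    nlinarith [norm_nonneg R, norm_nonneg T]
  set J := ∑' n, caradusSeq R W.toContinuousLinearMap ((r : ℂ) • T) n
  have hJ : AntilipschitzWith 2 J := antilipschitzWith_two_of_norm_sub_le W <|
    (norm_tsum_caradusSeq_sub_le hsmall).trans (by linarith [W.norm_toContinuousLinearMap_le])
  refine ⟨J, r, by exact_mod_cast hr.ne', hJ.injective, hJ.isClosed_range J.uniformContinuous, ?_⟩
  rw [mul_tsum_caradusSeq hUR hUW (hsmall.trans_lt (by norm_num)), mul_smul_comm]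

end Universal

lemma LinearIsometry.not_finiteDimensional_ker_of_mul_eq_zero {𝕜 E : Type*}
    [NontriviallyNormedField 𝕜] [NormedAddCommGroup E] [NormedSpace 𝕜 E] {U : E →L[𝕜] E}
    (W : E →ₗᵢ[𝕜] E) (hUW : U * W.toContinuousLinearMap = 0) (hE : ¬ FiniteDimensional 𝕜 E) :
    ¬ FiniteDimensional 𝕜 (LinearMap.ker (U : E →ₗ[𝕜] E)) := fun _ =>
  hE <| Module.Finite.of_injective
    (W.toLinearMap.codRestrict (LinearMap.ker (U : E →ₗ[𝕜] E)) fun x => congr($hUW x))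
    fun _ _ h => W.injective congr(($h : E))

lemma IsUniversalPair.not_finiteDimensional_ker_inf {H : Type*} [NormedAddCommGroup H]
    [InnerProductSpace ℂ H] {U₁ U₂ : H →L[ℂ] H} (h : IsUniversalPair U₁ U₂)
    (hH : ¬ FiniteDimensional ℂ H) :
    ¬ FiniteDimensional ℂ
      ↥(LinearMap.ker (U₁ : H →ₗ[ℂ] H) ⊓ LinearMap.ker (U₂ : H →ₗ[ℂ] H)) := fun _ => by
  obtain ⟨M, -, -, -, c, -, V, hV₁, hV₂⟩ := h.2 0 0 rfl
  refine hH <| Module.Finite.of_injective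
    ((M.subtype ∘ₗ (V : H →ₗ[ℂ] M)).codRestrict
      (LinearMap.ker (U₁ : H →ₗ[ℂ] H) ⊓ LinearMap.ker (U₂ : H →ₗ[ℂ] H))
      fun x => Submodule.mem_inf.2 ⟨LinearMap.mem_ker.2 (by simpa using hV₁ x),
        LinearMap.mem_ker.2 (by simpa using hV₂ x)⟩)
    fun _ _ h => V.injective (Subtype.ext congr(($h : H)))

namespace lp

section Composition

variable {𝕜 E ι : Type*} [NormedField 𝕜] [NormedAddCommGroup E] [NormedSpace 𝕜 E]
  {p : ℝ≥0∞} [Fact (1 ≤ p)] {σ : ι → ι}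
  {S : lp (fun _ : ι => E) p →L[𝕜] lp (fun _ : ι => E) p}

lemma mem_ker_iff_of_apply_eq_comp (hS : ∀ f i, S f i = f (σ i))
    {f : lp (fun _ : ι => E) p} :
    f ∈ LinearMap.ker (S : lp (fun _ : ι => E) p →ₗ[𝕜] lp (fun _ : ι => E) p) ↔
      ∀ i, f (σ i) = 0 := by
  rw [LinearMap.mem_ker, ContinuousLinearMap.coe_coe, lp.ext_iff, funext_iff]
  simp only [hS, lp.coeFn_zero, Pi.zero_apply]

variable (hS : ∀ f i, S f i = f (σ i)) (hp : 0 < p.toReal)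
include hS hp

lemma mul_extendZero_eq_one_of_apply_eq_comp (hσ : Injective σ) :
    S * (extendZero 𝕜 E hp hσ).toContinuousLinearMap = 1 :=
  ContinuousLinearMap.ext fun f => lp.ext <| funext fun i => by
    simp [hS, extendZero_apply, hσ.extend_apply]

lemma surjective_of_apply_eq_comp (hσ : Injective σ) : Surjective S := fun f =>
  ⟨_, congr($(mul_extendZero_eq_one_of_apply_eq_comp hS hp hσ) f)⟩

lemma mul_extendZero_eq_zero_of_apply_eq_comp {w : ι → ι} (hw : Injective w)
    (hdisj : ∀ i j, w i ≠ σ j) : S * (extendZero 𝕜 E hp hw).toContinuousLinearMap = 0 :=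
  ContinuousLinearMap.ext fun f => lp.ext <| funext fun i => by
    simp [hS, extendZero_apply, extend_apply' _ _ _ fun ⟨j, hj⟩ => hdisj j i hj]

end Composition

lemma commute_of_apply_eq_comp {𝕜 E ι : Type*} [NormedField 𝕜] [NormedAddCommGroup E]
    [NormedSpace 𝕜 E] {p : ℝ≥0∞} [Fact (1 ≤ p)] {σ₁ σ₂ : ι → ι}
    {S₁ S₂ : lp (fun _ : ι => E) p →L[𝕜] lp (fun _ : ι => E) p}
    (hS₁ : ∀ f i, S₁ f i = f (σ₁ i)) (hS₂ : ∀ f i, S₂ f i = f (σ₂ i))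
    (hσ : σ₂ ∘ σ₁ = σ₁ ∘ σ₂) : S₁.comp S₂ = S₂.comp S₁ :=
  ContinuousLinearMap.ext fun f => lp.ext <| funext fun i => by
    simp only [ContinuousLinearMap.comp_apply, hS₁, hS₂]
    exact congr(f ($hσ i))

lemma ker_inf_ker_eq_span_single_of_apply_eq_comp {𝕜 ι : Type*} [NormedField 𝕜]
    [DecidableEq ι] {p : ℝ≥0∞} [Fact (1 ≤ p)] {σ₁ σ₂ : ι → ι}
    {S₁ S₂ : lp (fun _ : ι => 𝕜) p →L[𝕜] lp (fun _ : ι => 𝕜) p}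
    (hS₁ : ∀ f i, S₁ f i = f (σ₁ i)) (hS₂ : ∀ f i, S₂ f i = f (σ₂ i)) {i₀ : ι}
    (hrange : range σ₁ ∪ range σ₂ = {i₀}ᶜ) :
    LinearMap.ker (S₁ : lp (fun _ : ι => 𝕜) p →ₗ[𝕜] lp (fun _ : ι => 𝕜) p) ⊓
        LinearMap.ker (S₂ : lp (fun _ : ι => 𝕜) p →ₗ[𝕜] lp (fun _ : ι => 𝕜) p) =
      Submodule.span 𝕜 {lp.single p i₀ 1} := by
  ext f
  rw [Submodule.mem_inf, mem_ker_iff_of_apply_eq_comp hS₁, mem_ker_iff_of_apply_eq_comp hS₂,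
    mem_span_single_one_iff]
  simp only [← mem_compl_singleton_iff, ← hrange, mem_union, or_imp, forall_and,
    forall_mem_range]

lemma not_finiteDimensional_ker_of_apply_eq_comp {𝕜 ι : Type*} [NontriviallyNormedField 𝕜]
    [Infinite ι] {p : ℝ≥0∞} [Fact (1 ≤ p)] {σ w : ι → ι}
    {S : lp (fun _ : ι => 𝕜) p →L[𝕜] lp (fun _ : ι => 𝕜) p} (hS : ∀ f i, S f i = f (σ i))
    (hp : 0 < p.toReal) (hw : Injective w) (hdisj : ∀ i j, w i ≠ σ j) :
    ¬ FiniteDimensional 𝕜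
      (LinearMap.ker (S : lp (fun _ : ι => 𝕜) p →ₗ[𝕜] lp (fun _ : ι => 𝕜) p)) :=
  (extendZero 𝕜 𝕜 hp hw).not_finiteDimensional_ker_of_mul_eq_zero
    (mul_extendZero_eq_zero_of_apply_eq_comp hS hp hw hdisj) not_finiteDimensional

theorem isUniversal_of_apply_eq_comp {ι : Type*} {σ w : ι → ι}
    {S : lp (fun _ : ι => ℂ) 2 →L[ℂ] lp (fun _ : ι => ℂ) 2} (hS : ∀ f i, S f i = f (σ i))
    (hσ : Injective σ) (hw : Injective w) (hdisj : ∀ i j, w i ≠ σ j) : IsUniversal S := by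
  have hp : 0 < (2 : ℝ≥0∞).toReal := by norm_num
  exact isUniversal_of_mul_eq_one_of_mul_isometry_eq_zero (extendZero ℂ ℂ hp hw)
    (mul_extendZero_eq_one_of_apply_eq_comp hS hp hσ)
    (mul_extendZero_eq_zero_of_apply_eq_comp hS hp hw hdisj)

end lp

lemma range_prodMap_succ_id_union_range_prodMap_id_succ :
    range (Prod.map Nat.succ id) ∪ range (Prod.map id Nat.succ) =
      ({(0, 0)}ᶜ : Set (ℕ × ℕ)) := by
  ext ⟨_ | a, _ | b⟩ <;> simp

theorem shift_pair_on_scalar_l2_not_universal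
    (S₁ S₂ : lp (fun _ : ℕ × ℕ => ℂ) 2 →L[ℂ] lp (fun _ : ℕ × ℕ => ℂ) 2)
    (hS₁ : ∀ (f : lp (fun _ : ℕ × ℕ => ℂ) 2) (i j : ℕ), (S₁ f) (i, j) = f (i + 1, j))
    (hS₂ : ∀ (f : lp (fun _ : ℕ × ℕ => ℂ) 2) (i j : ℕ), (S₂ f) (i, j) = f (i, j + 1)) :
    S₁.comp S₂ = S₂.comp S₁ ∧
    Function.Surjective S₁ ∧ Function.Surjective S₂ ∧
    ¬ FiniteDimensional ℂ (LinearMap.ker (S₁ : lp (fun _ : ℕ × ℕ => ℂ) 2 →ₗ[ℂ] lp (fun _ : ℕ × ℕ => ℂ) 2)) ∧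
    ¬ FiniteDimensional ℂ (LinearMap.ker (S₂ : lp (fun _ : ℕ × ℕ => ℂ) 2 →ₗ[ℂ] lp (fun _ : ℕ × ℕ => ℂ) 2)) ∧
    IsUniversal S₁ ∧ IsUniversal S₂ ∧
    (LinearMap.ker (S₁ : lp (fun _ : ℕ × ℕ => ℂ) 2 →ₗ[ℂ] lp (fun _ : ℕ × ℕ => ℂ) 2) ⊓ LinearMap.ker (S₂ : lp (fun _ : ℕ × ℕ => ℂ) 2 →ₗ[ℂ] lp (fun _ : ℕ × ℕ => ℂ) 2) : Submodule ℂ (lp (fun _ : ℕ × ℕ => ℂ) 2)) =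
      Submodule.span ℂ {lp.single 2 ((0 : ℕ), (0 : ℕ)) (1 : ℂ)} ∧
    ¬ IsUniversalPair S₁ S₂ := by
  have hσ₁ : ∀ f p, S₁ f p = f (Prod.map Nat.succ id p) := fun f p => hS₁ f p.1 p.2
  have hσ₂ : ∀ f p, S₂ f p = f (Prod.map id Nat.succ p) := fun f p => hS₂ f p.1 p.2
  have hinj₁ : Injective (Prod.map Nat.succ id : ℕ × ℕ → ℕ × ℕ) :=
    Nat.succ_injective.prodMap injective_id
  have hinj₂ : Injective (Prod.map id Nat.succ : ℕ × ℕ → ℕ × ℕ) :=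
    injective_id.prodMap Nat.succ_injective
  -- Cantor pairing embeds the whole index set into the column `i = 0` and the row `j = 0`.
  have hw₁ : Injective (Prod.mk 0 ∘ Nat.pairEquiv) :=
    (Prod.mk_right_injective 0).comp Nat.pairEquiv.injective
  have hw₂ : Injective ((·, 0) ∘ Nat.pairEquiv) :=
    (Prod.mk_left_injective 0).comp Nat.pairEquiv.injective
  have hdisj₁ : ∀ i j, (Prod.mk 0 ∘ Nat.pairEquiv) i ≠ Prod.map Nat.succ id j :=
    fun _ _ h => Nat.succ_ne_zero _ congr(($h).1).symm
  have hdisj₂ : ∀ i j, ((·, 0) ∘ Nat.pairEquiv) i ≠ Prod.map id Nat.succ j :=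
    fun _ _ h => Nat.succ_ne_zero _ congr(($h).2).symm
  have hp : 0 < (2 : ℝ≥0∞).toReal := by norm_num
  have hker := lp.ker_inf_ker_eq_span_single_of_apply_eq_comp hσ₁ hσ₂
    range_prodMap_succ_id_union_range_prodMap_id_succ
  refine ⟨lp.commute_of_apply_eq_comp hσ₁ hσ₂ rfl, lp.surjective_of_apply_eq_comp hσ₁ hp hinj₁,
    lp.surjective_of_apply_eq_comp hσ₂ hp hinj₂,
    lp.not_finiteDimensional_ker_of_apply_eq_comp hσ₁ hp hw₁ hdisj₁,
    lp.not_finiteDimensional_ker_of_apply_eq_comp hσ₂ hp hw₂ hdisj₂,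
    lp.isUniversal_of_apply_eq_comp hσ₁ hinj₁ hw₁ hdisj₁,
    lp.isUniversal_of_apply_eq_comp hσ₂ hinj₂ hw₂ hdisj₂, hker, fun h => ?_⟩
  exact h.not_finiteDimensional_ker_inf lp.not_finiteDimensional (by rw [hker]; infer_instance)

end
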